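/- Correctness of the reduction showing fallback voting resistant to constructive control by run-off partition of candidates in model TP: let (C,V) be the fallback voting election obtained by Construction 1 from a Hitting Set instance (B,S,k). Then S has a hitting set of size at most k if and only if there exists a partition of C into disjoint sets C1 and C2 such that w is the unique FV winner of the final-round election (W1 ∪ W2, V), where Wi denotes the set of FV winners of the subelection (Ci, V). -/

import Mathlib

/-!
Fallback voting (Brams and Sanver).  A vote is represented by the list of the
candidates the voter approves of, in order of preference (most preferred
first); all candidates not occurring in the list are disapproved.  The voter
collection is a multiset of such votes.
-/

namespace FV

variable {α : Type} [DecidableEq α]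

/-- The level-`i` score of candidate `c` in the election with votes `V`:
the number of voters who approve of `c` and rank `c` among their top `i`
approved candidates. -/
def levelScore (V : Multiset (List α)) (i : ℕ) (c : α) : ℕ :=
  (V.filter (fun v => c ∈ v.take i)).card

/-- The approval score of candidate `c`: the number of voters approving of `c`. -/
def apprScore (V : Multiset (List α)) (c : α) : ℕ :=
  (V.filter (fun v => c ∈ v)).card

/-- Restriction of the votes to the candidate set `C`: each voter's approval
set and ranking are restricted to `C`. -/
def restrict (C : Finset α) (V : Multiset (List α)) : Multiset (List α) :=
  V.map (fun v => v.filter (fun x => decide (x ∈ C)))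

instance instDecMaj (C : Finset α) (V : Multiset (List α)) :
    DecidablePred (fun i =>
      i ∈ Finset.Icc 1 C.card ∧ ∃ c ∈ C, 2 * levelScore V i c > Multiset.card V) :=
  fun _ => inferInstance

/-- The set of fallback-voting winners of the election `(C,V)`:
if some level `i` with `1 ≤ i ≤ ‖C‖` exists at which some candidate of `C`
has a strict majority (level-`i` score exceeding `‖V‖/2`), then the winners
are the candidates with the largest level-`i₀` score, where `i₀` is the
smallest such level; otherwise the winners are the candidates with the largest
approval score. -/
def winners (C : Finset α) (V : Multiset (List α)) : Finset α :=
  if h : ∃ i, i ∈ Finset.Icc 1 C.card ∧ ∃ c ∈ C, 2 * levelScore V i c > Multiset.card V then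
    C.filter (fun c => ∀ d ∈ C, levelScore V (Nat.find h) d ≤ levelScore V (Nat.find h) c)
  else
    C.filter (fun c => ∀ d ∈ C, apprScore V d ≤ apprScore V c)

/-- The FV winners of the election `(C,V)` restricted to the candidate set `C`. -/
def fwinners (C : Finset α) (V : Multiset (List α)) : Finset α :=
  winners C (restrict C V)

end FV

/-! ### Construction 1 from a Hitting Set instance `(B, S, k)` -/

/-- Candidates of Construction 1: the elements of `B = {b_0, …, b_{m-1}}`
together with the three candidates `c`, `d`, and `w`. -/
inductive CandA (m : ℕ) where
  | b (j : Fin m)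
  | c
  | d
  | w
deriving DecidableEq

/-- The elements of a subset `T ⊆ B`, ranked according to the fixed linear
order on `B`. -/
def blistA {m : ℕ} (T : Finset (Fin m)) : List (CandA m) :=
  (T.sort (· ≤ ·)).map CandA.b

/-- The candidate set `C = B ∪ {c, d, w}` of Construction 1. -/
def CA (m : ℕ) : Finset (CandA m) :=
  (Finset.univ : Finset (Fin m)).image CandA.b ∪ {CandA.c, CandA.d, CandA.w}

/-- The voter collection of Construction 1:
`2m+1` voters `c | B∪{d,w}`; `2n+2k(n−1)+3` voters `c w | B∪{d}`;
`2n(k+1)+5` voters `w c | B∪{d}`; for each `i`, `2(k+1)` voters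
`d S_i c | (B−S_i)∪{w}`; for each `j`, two voters `d b_j w | (B−{b_j})∪{c}`;
and `2(k+1)` voters `d w c | B`. -/
def VA (m n k : ℕ) (S : Fin n → Finset (Fin m)) : Multiset (List (CandA m)) :=
  Multiset.replicate (2*m+1) [CandA.c] +
  Multiset.replicate (2*n + 2*k*(n-1) + 3) [CandA.c, CandA.w] +
  Multiset.replicate (2*n*(k+1) + 5) [CandA.w, CandA.c] +
  (∑ i : Fin n, Multiset.replicate (2*(k+1)) ([CandA.d] ++ blistA (S i) ++ [CandA.c])) +
  (∑ j : Fin m, Multiset.replicate 2 [CandA.d, CandA.b j, CandA.w]) +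
  Multiset.replicate (2*(k+1)) [CandA.d, CandA.w, CandA.c]


/-! The hitting set is read off the part of the partition that contains `c`.  If `w` is not in
that part, `c` has a level-1 majority there and wins it.  Otherwise `c` has a level-2 majority and
nobody has a level-1 majority, so only `w` can beat `c`, at level 2.  With `d` present, `c` gains
`2(k+1)` level-2 points for every `S_i` missed by the `B`-candidates of the part and `w` loses `2`
for each `B`-candidate present, so `w` beats `c` exactly when these candidates form a hitting set
of size at most `k`; without `d`, `w` never beats `c`.  If `c` reaches the final round, the same
argument applies there.  Conversely, for a hitting set `B'` the part `B' ∪ {c, d, w}` is won by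
`w` alone, and in the final round `w` faces only `B`-candidates, each approved by fewer voters
than rank `w` first. -/

theorem Multiset.countP_replicate {α : Type*} (p : α → Prop) [DecidablePred p] (r : ℕ) (a : α) :
    (Multiset.replicate r a).countP p = if p a then r else 0 := by
  induction r with
  | zero => simp
  | succ r ih => split_ifs at ih ⊢ <;> simp [Multiset.replicate_succ, *]

theorem List.notMem_take_of_notMem {α : Type*} {x : α} {l : List α} (h : x ∉ l) (i : ℕ) :
    x ∉ l.take i :=
  fun hx => h (List.mem_of_mem_take hx)

theorem List.mem_take_one_append_singleton_iff {α : Type*} {x : α} {l : List α} (hx : x ∉ l) :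
    x ∈ (l ++ [x]).take 1 ↔ l = [] := by
  cases l with
  | nil => simp
  | cons a l => simpa [eq_comm] using fun h : x = a => hx (h ▸ List.mem_cons_self)

theorem Finset.filter_forall_le_eq_singleton {β γ : Type*} [LinearOrder γ] {s : Finset β}
    {f : β → γ} {x : β} (hx : x ∈ s) (h : ∀ y ∈ s, y ≠ x → f y < f x) :
    s.filter (fun y => ∀ z ∈ s, f z ≤ f y) = {x} := by
  ext y
  simp only [Finset.mem_filter, Finset.mem_singleton]
  constructor
  · rintro ⟨hy, hmax⟩
    by_contra hyx
    exact (h y hy hyx).not_ge (hmax x hx)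
  · rintro rfl
    exact ⟨hx, fun z hz => (eq_or_ne z y).elim (fun h => h ▸ le_rfl) fun hzy => (h z hz hzy).le⟩

namespace FV

variable {α : Type} [DecidableEq α]

theorem levelScore_restrict (D : Finset α) (V : Multiset (List α)) (i : ℕ) (x : α) :
    levelScore (restrict D V) i x
      = V.countP (fun v => x ∈ (v.filter (fun y => decide (y ∈ D))).take i) := by
  rw [levelScore, restrict, Multiset.filter_map, Multiset.card_map, Multiset.countP_eq_card_filter]
  rfl

theorem apprScore_eq_countP (V : Multiset (List α)) (x : α) :
    apprScore V x = V.countP (fun v => x ∈ v) :=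
  (Multiset.countP_eq_card_filter _ _).symm

theorem card_restrict (D : Finset α) (V : Multiset (List α)) :
    Multiset.card (restrict D V) = Multiset.card V :=
  Multiset.card_map _ _

theorem levelScore_mono (V : Multiset (List α)) {i j : ℕ} (h : i ≤ j) (x : α) :
    levelScore V i x ≤ levelScore V j x :=
  Multiset.card_le_card <| Multiset.monotone_filter_right V fun _ hv =>
    List.take_subset_take_left _ h hv

theorem levelScore_le_apprScore (V : Multiset (List α)) (i : ℕ) (x : α) :
    levelScore V i x ≤ apprScore V x :=
  Multiset.card_le_card <| Multiset.monotone_filter_right V fun _ => List.mem_of_mem_take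

theorem apprScore_restrict_le (D : Finset α) (V : Multiset (List α)) (x : α) :
    apprScore (restrict D V) x ≤ apprScore V x := by
  rw [apprScore, restrict, Multiset.filter_map, Multiset.card_map]
  exact Multiset.card_le_card <| Multiset.monotone_filter_right V fun _ hv =>
    List.mem_of_mem_filter hv

theorem levelScore_restrict_le_apprScore (D : Finset α) (V : Multiset (List α)) (i : ℕ) (x : α) :
    levelScore (restrict D V) i x ≤ apprScore V x :=
  (levelScore_le_apprScore _ i x).trans (apprScore_restrict_le D V x)

theorem winners_subset (C : Finset α) (V : Multiset (List α)) : winners C V ⊆ C := by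
  unfold winners
  split <;> exact Finset.filter_subset _ _

theorem fwinners_subset (C : Finset α) (V : Multiset (List α)) : fwinners C V ⊆ C :=
  winners_subset C _

variable {C : Finset α} {V : Multiset (List α)}

theorem winners_eq_filter_of_majority {i₀ : ℕ} (h₀ : 1 ≤ i₀) (hC : i₀ ≤ C.card)
    (hmaj : ∃ x ∈ C, Multiset.card V < 2 * levelScore V i₀ x)
    (hmin : ∀ j, 1 ≤ j → j < i₀ → ∀ y ∈ C, 2 * levelScore V j y ≤ Multiset.card V) :
    winners C V = C.filter (fun x => ∀ y ∈ C, levelScore V i₀ y ≤ levelScore V i₀ x) := by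
  have hi₀ : i₀ ∈ Finset.Icc 1 C.card ∧ ∃ x ∈ C, 2 * levelScore V i₀ x > Multiset.card V :=
    ⟨Finset.mem_Icc.2 ⟨h₀, hC⟩, hmaj⟩
  have hex : ∃ i, i ∈ Finset.Icc 1 C.card ∧ ∃ x ∈ C, 2 * levelScore V i x > Multiset.card V :=
    ⟨i₀, hi₀⟩
  have hfind : Nat.find hex = i₀ := by
    rw [Nat.find_eq_iff]
    refine ⟨hi₀, fun j hj ⟨hj₁, y, hy, hymaj⟩ => ?_⟩
    exact (hmin j (Finset.mem_Icc.1 hj₁).1 hj y hy).not_gt hymaj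
  rw [winners, dif_pos hex, hfind]

theorem winners_eq_singleton_of_apprScore_lt {x : α} (hx : x ∈ C)
    (h : ∀ y ∈ C, y ≠ x → apprScore V y < levelScore V 1 x) : winners C V = {x} := by
  rw [winners]
  split_ifs with hmaj
  · have h₁ : 1 ≤ Nat.find hmaj := (Finset.mem_Icc.1 (Nat.find_spec hmaj).1).1
    refine Finset.filter_forall_le_eq_singleton hx fun y hy hyx => ?_
    calc levelScore V (Nat.find hmaj) y ≤ apprScore V y := levelScore_le_apprScore V _ y
      _ < levelScore V 1 x := h y hy hyx
      _ ≤ levelScore V (Nat.find hmaj) x := levelScore_mono V h₁ x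
  · exact Finset.filter_forall_le_eq_singleton hx fun y hy hyx =>
      (h y hy hyx).trans_le (levelScore_le_apprScore V 1 x)

theorem exists_levelScore_two_lt_of_notMem_winners {x : α} (hx : x ∈ C) (hC : 2 ≤ C.card)
    (hmaj : Multiset.card V < 2 * levelScore V 2 x)
    (h₁ : ∀ y ∈ C, y ≠ x → 2 * levelScore V 1 y ≤ Multiset.card V) (hnot : x ∉ winners C V) :
    ∃ y ∈ C, levelScore V 2 x < levelScore V 2 y := by
  by_cases hmaj₁ : Multiset.card V < 2 * levelScore V 1 x
  · refine absurd ?_ hnot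
    rw [winners_eq_filter_of_majority le_rfl (by omega) ⟨x, hx, hmaj₁⟩ (by omega),
      Finset.filter_forall_le_eq_singleton hx fun y hy hyx => by have := h₁ y hy hyx; omega]
    exact Finset.mem_singleton_self x
  · rw [winners_eq_filter_of_majority (by omega) hC ⟨x, hx, hmaj⟩ fun j h₀ hj y hy => by
      obtain rfl : j = 1 := by omega
      exact (eq_or_ne y x).elim (fun h => h ▸ by omega) (h₁ y hy)] at hnot
    simpa [hx] using hnot

end FV

namespace Construction1

open FV CandA

variable {m n k : ℕ} {S : Fin n → Finset (Fin m)} {D : Finset (CandA m)}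

theorem mem_CA (x : CandA m) : x ∈ CA m := by
  cases x <;> simp [CA]

def bPart (D : Finset (CandA m)) : Finset (Fin m) :=
  Finset.univ.filter (fun j => b j ∈ D)

theorem countP_VA (p : List (CandA m) → Prop) [DecidablePred p] :
    (VA m n k S).countP p =
      (if p [c] then 2*m+1 else 0) + (if p [c, w] then 2*n + 2*k*(n-1) + 3 else 0)
      + (if p [w, c] then 2*n*(k+1) + 5 else 0)
      + (∑ i, if p ([d] ++ blistA (S i) ++ [c]) then 2*(k+1) else 0)
      + (∑ j, if p [d, b j, w] then 2 else 0)
      + (if p [d, w, c] then 2*(k+1) else 0) := by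
  simp only [VA, Multiset.countP_add, ← Multiset.coe_countPAddMonoidHom, map_sum]
  simp only [Multiset.coe_countPAddMonoidHom, Multiset.countP_replicate]

theorem card_restrict_VA (D : Finset (CandA m)) (hn : 1 ≤ n) :
    Multiset.card (restrict D (VA m n k S)) = 6*n*(k+1) + 4*m + 11 := by
  obtain ⟨n, rfl⟩ : ∃ n', n = n' + 1 := ⟨n - 1, by omega⟩
  simp [card_restrict, VA, Multiset.card_sum]
  ring

theorem apprScore_b_le (j : Fin m) : apprScore (VA m n k S) (b j) ≤ 2*n*(k+1) + 2 := by
  have hj : (Finset.univ.filter fun i => j ∈ S i).card ≤ n :=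
    (Finset.card_le_univ _).trans_eq (Fintype.card_fin n)
  rw [apprScore_eq_countP, countP_VA]
  simp [blistA, Finset.sum_ite]
  nlinarith

theorem apprScore_le_of_ne_c_of_ne_w {x : CandA m} (hc : x ≠ c) (hw : x ≠ w) :
    apprScore (VA m n k S) x ≤ 2*n*(k+1) + 2*m + 2*(k+1) := by
  cases x with
  | b j => have := apprScore_b_le (k := k) (S := S) j; omega
  | d => rw [apprScore_eq_countP, countP_VA]; simp [blistA]; linarith
  | c => exact absurd rfl hc
  | w => exact absurd rfl hw

theorem apprScore_w :
    apprScore (VA m n k S) w = (2*n + 2*k*(n-1) + 3) + (2*n*(k+1) + 5) + 2*m + 2*(k+1) := by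
  rw [apprScore_eq_countP, countP_VA]
  simp [blistA]
  ring

theorem levelScore_le_of_ne_c_of_ne_w (D : Finset (CandA m)) (i : ℕ) {y : CandA m}
    (hc : y ≠ c) (hw : y ≠ w) :
    levelScore (restrict D (VA m n k S)) i y ≤ 2*n*(k+1) + 2*m + 2*(k+1) :=
  (levelScore_restrict_le_apprScore _ _ i y).trans (apprScore_le_of_ne_c_of_ne_w hc hw)

theorem levelScore_one_c_ge (hc : c ∈ D) (hw : w ∉ D) :
    (2*m+1) + (2*n + 2*k*(n-1) + 3) + (2*n*(k+1) + 5)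
      ≤ levelScore (restrict D (VA m n k S)) 1 c := by
  rw [levelScore_restrict, countP_VA]
  simp [hc, hw, List.filter_cons]
  omega

theorem levelScore_two_c_ge (hc : c ∈ D) (hw : w ∈ D) :
    (2*m+1) + (2*n + 2*k*(n-1) + 3) + (2*n*(k+1) + 5)
      ≤ levelScore (restrict D (VA m n k S)) 2 c := by
  rw [levelScore_restrict, countP_VA]
  simp [hc, hw, List.filter_cons]
  omega

theorem levelScore_two_c_ge_of_d_notMem (hc : c ∈ D) (hw : w ∈ D) (hd : d ∉ D) :
    (2*m+1) + (2*n + 2*k*(n-1) + 3) + (2*n*(k+1) + 5) + 2*(k+1)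
      ≤ levelScore (restrict D (VA m n k S)) 2 c := by
  rw [levelScore_restrict, countP_VA]
  simp [hc, hw, hd, List.filter_cons]
  omega

theorem c_mem_take_one_filter_blistA_iff (T : Finset (Fin m)) :
    c ∈ ((blistA T).filter (fun y => decide (y ∈ D)) ++ [c]).take 1 ↔ Disjoint (bPart D) T := by
  rw [List.mem_take_one_append_singleton_iff (by simp [blistA]), List.filter_eq_nil_iff]
  simp [blistA, bPart, Finset.disjoint_right]

theorem levelScore_two_c (hc : c ∈ D) (hw : w ∈ D) (hd : d ∈ D) :
    levelScore (restrict D (VA m n k S)) 2 c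
      = (2*m+1) + (2*n + 2*k*(n-1) + 3) + (2*n*(k+1) + 5)
        + 2*(k+1) * (Finset.univ.filter fun i => Disjoint (bPart D) (S i)).card := by
  rw [levelScore_restrict, countP_VA]
  simp [hc, hw, hd, List.filter_cons, c_mem_take_one_filter_blistA_iff, Finset.sum_ite,
    apply_ite (List.take 1), apply_ite (c ∈ · : List (CandA m) → Prop)]
  ring

theorem levelScore_one_c (hc : c ∈ D) (hw : w ∈ D) (hd : d ∈ D) :
    levelScore (restrict D (VA m n k S)) 1 c = (2*m+1) + (2*n + 2*k*(n-1) + 3) := by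
  rw [levelScore_restrict, countP_VA]
  simp [hc, hw, hd, List.filter_cons]

theorem levelScore_one_w_le (hc : c ∈ D) (hw : w ∈ D) :
    levelScore (restrict D (VA m n k S)) 1 w ≤ (2*n*(k+1) + 5) + 2*m + 2*(k+1) := by
  rw [levelScore_restrict, countP_VA]
  have hB := (Finset.card_le_univ (Finset.univ.filter fun j => b j ∉ D)).trans_eq
    (Fintype.card_fin m)
  by_cases hd : d ∈ D
  · simp [hc, hw, hd, List.filter_cons]
    omega
  · simp [hc, hw, hd, List.filter_cons, List.notMem_take_of_notMem, blistA,
      apply_ite (List.take 1), apply_ite (w ∈ · : List (CandA m) → Prop), Finset.sum_ite]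
    omega

theorem levelScore_two_w (hc : c ∈ D) (hw : w ∈ D) (hd : d ∈ D) :
    levelScore (restrict D (VA m n k S)) 2 w
      = (2*n + 2*k*(n-1) + 3) + (2*n*(k+1) + 5) + 2*(k+1) + 2 * (bPart D)ᶜ.card := by
  have hcompl : (Finset.univ.filter fun j => b j ∉ D) = (bPart D)ᶜ := by ext; simp [bPart]
  rw [levelScore_restrict, countP_VA]
  simp [hc, hw, hd, hcompl, List.filter_cons, List.notMem_take_of_notMem, blistA,
    apply_ite (List.take 1), apply_ite (w ∈ · : List (CandA m) → Prop), Finset.sum_ite]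
  ring

theorem levelScore_one_w_ge (hw : w ∈ D) :
    2*n*(k+1) + 5 ≤ levelScore (restrict D (VA m n k S)) 1 w := by
  rw [levelScore_restrict, countP_VA]
  simp [hw, List.filter_cons]
  omega

theorem two_mul_levelScore_one_le_card (hn : 1 < n) (hc : c ∈ D) (hw : w ∈ D) {y : CandA m}
    (hy : y ≠ c) :
    2 * levelScore (restrict D (VA m n k S)) 1 y ≤ Multiset.card (restrict D (VA m n k S)) := by
  have hnk : 2 * (k + 1) ≤ n * (k + 1) := Nat.mul_le_mul_right _ hn
  rw [card_restrict_VA D hn.le]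
  rcases eq_or_ne y w with rfl | hyw
  · have := levelScore_one_w_le (k := k) (S := S) hc hw
    linarith
  · have := levelScore_le_of_ne_c_of_ne_w (k := k) (S := S) D 1 hy hyw
    linarith

theorem hittingSet_bPart_of_levelScore_two_c_lt_w (hc : c ∈ D) (hw : w ∈ D) (hd : d ∈ D)
    (hlt : levelScore (restrict D (VA m n k S)) 2 c < levelScore (restrict D (VA m n k S)) 2 w) :
    (bPart D).card ≤ k ∧ ∀ i, (bPart D ∩ S i).Nonempty := by
  rw [levelScore_two_c hc hw hd, levelScore_two_w hc hw hd] at hlt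
  have hm : (bPart D)ᶜ.card + (bPart D).card = m :=
    (Finset.card_compl_add_card _).trans (Fintype.card_fin m)
  have hmiss : (Finset.univ.filter fun i => Disjoint (bPart D) (S i)).card = 0 := by
    by_contra h
    have := Nat.mul_le_mul_left (2 * (k + 1)) (Nat.one_le_iff_ne_zero.2 h)
    omega
  rw [hmiss] at hlt
  refine ⟨by omega, fun i => Finset.not_disjoint_iff_nonempty_inter.1 fun h => ?_⟩
  rw [Finset.card_eq_zero, Finset.filter_eq_empty_iff] at hmiss
  exact hmiss (Finset.mem_univ i) h

theorem exists_hittingSet_of_notMem_fwinners (hn : 1 < n) (hc : c ∈ D)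
    (hnot : c ∉ fwinners D (VA m n k S)) :
    ∃ B' : Finset (Fin m), B'.card ≤ k ∧ ∀ i, (B' ∩ S i).Nonempty := by
  have hN := card_restrict_VA (k := k) (S := S) D hn.le
  have hkn : k * (n - 1) + k = n * k := by
    rw [← Nat.mul_add_one, Nat.sub_add_cancel hn.le, mul_comm]
  have hnk : 2 * k ≤ n * k := Nat.mul_le_mul_right _ hn
  by_cases hw : w ∈ D
  swap
  · refine absurd ?_ hnot
    have hc₁ := levelScore_one_c_ge (k := k) (S := S) hc hw
    rw [fwinners, winners_eq_singleton_of_apprScore_lt hc fun y hy hyc => ?_]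
    · exact Finset.mem_singleton_self c
    have := (apprScore_restrict_le D _ y).trans
      (apprScore_le_of_ne_c_of_ne_w (k := k) (S := S) hyc (ne_of_mem_of_not_mem hy hw))
    linarith
  have hc₂ := levelScore_two_c_ge (k := k) (S := S) hc hw
  obtain ⟨y, -, hlt⟩ := exists_levelScore_two_lt_of_notMem_winners hc
    (Finset.one_lt_card.2 ⟨c, hc, w, hw, by simp⟩) (by linarith)
    (fun y _ hyc => two_mul_levelScore_one_le_card hn hc hw hyc) hnot
  obtain rfl : y = w := by
    by_contra hyw
    have hyc : y ≠ c := by rintro rfl; exact lt_irrefl _ hlt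
    have := levelScore_le_of_ne_c_of_ne_w (k := k) (S := S) D 2 hyc hyw
    linarith
  by_cases hd : d ∈ D
  · exact ⟨bPart D, hittingSet_bPart_of_levelScore_two_c_lt_w hc hw hd hlt⟩
  · have := levelScore_two_c_ge_of_d_notMem (k := k) (S := S) hc hw hd
    have := (levelScore_restrict_le_apprScore D _ 2 w).trans_eq (apprScore_w (k := k) (S := S))
    omega

theorem fwinners_image_b_union_eq_w (hn : 1 < n) {B' : Finset (Fin m)} (hB' : B'.card ≤ k)
    (hhit : ∀ i, (B' ∩ S i).Nonempty) :
    fwinners (B'.image b ∪ {c, d, w}) (VA m n k S) = {w} := by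
  set D := B'.image b ∪ {c, d, w}
  have hc : c ∈ D := by simp [D]
  have hd : d ∈ D := by simp [D]
  have hw : w ∈ D := by simp [D]
  have hN := card_restrict_VA (k := k) (S := S) D hn.le
  have hkn : k * (n - 1) + k = n * k := by
    rw [← Nat.mul_add_one, Nat.sub_add_cancel hn.le, mul_comm]
  have hnk : 2 * k ≤ n * k := Nat.mul_le_mul_right _ hn
  have hbPart : bPart D = B' := by ext j; simp [bPart, D]
  have hmiss : (Finset.univ.filter fun i => Disjoint (bPart D) (S i)).card = 0 := by
    rw [hbPart, Finset.card_eq_zero, Finset.filter_eq_empty_iff]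
    exact fun i _ => Finset.not_disjoint_iff_nonempty_inter.2 (hhit i)
  have hm : B'ᶜ.card + B'.card = m := (Finset.card_compl_add_card _).trans (Fintype.card_fin m)
  have hc₂ := levelScore_two_c (k := k) (S := S) hc hw hd
  have hw₂ := levelScore_two_w (k := k) (S := S) hc hw hd
  rw [hmiss] at hc₂
  rw [hbPart] at hw₂
  have hw_max : ∀ y ∈ D, y ≠ w →
      levelScore (restrict D (VA m n k S)) 2 y < levelScore (restrict D (VA m n k S)) 2 w := by
    intro y _ hyw
    rcases eq_or_ne y c with rfl | hyc
    · omega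
    · have := levelScore_le_of_ne_c_of_ne_w (k := k) (S := S) D 2 hyc hyw
      linarith
  have h₁ : ∀ y ∈ D, 2 * levelScore (restrict D (VA m n k S)) 1 y
      ≤ Multiset.card (restrict D (VA m n k S)) := by
    intro y _
    rcases eq_or_ne y c with rfl | hyc
    · have := levelScore_one_c (k := k) (S := S) hc hw hd
      linarith
    · exact two_mul_levelScore_one_le_card hn hc hw hyc
  rw [fwinners, winners_eq_filter_of_majority (i₀ := 2) le_add_self
    (Finset.one_lt_card.2 ⟨c, hc, w, hw, by simp⟩) ⟨w, hw, by linarith⟩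
    fun j h₀ hj => (show j = 1 by omega) ▸ h₁, Finset.filter_forall_le_eq_singleton hw hw_max]

theorem fwinners_w_union_eq_w {W : Finset (CandA m)} (hW : ∀ x ∈ W, ∃ j, x = b j) :
    fwinners ({w} ∪ W) (VA m n k S) = {w} := by
  refine winners_eq_singleton_of_apprScore_lt (by simp) fun y hy hyw => ?_
  obtain ⟨j, rfl⟩ := hW y ((Finset.mem_union.1 hy).resolve_left (by simpa using hyw))
  calc apprScore _ (b j) ≤ apprScore (VA m n k S) (b j) := apprScore_restrict_le _ _ _
    _ ≤ 2*n*(k+1) + 2 := apprScore_b_le j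
    _ < 2*n*(k+1) + 5 := by omega
    _ ≤ levelScore _ 1 w := levelScore_one_w_ge (by simp)

theorem exists_hittingSet_of_fwinners_subset (hn : 1 < n) {F : Finset (CandA m)} (hcD : c ∈ D)
    (hsub : fwinners D (VA m n k S) ⊆ F) (hF : fwinners F (VA m n k S) = {w}) :
    ∃ B' : Finset (Fin m), B'.card ≤ k ∧ ∀ i, (B' ∩ S i).Nonempty := by
  by_cases hcW : c ∈ fwinners D (VA m n k S)
  · exact exists_hittingSet_of_notMem_fwinners hn (hsub hcW) (by simp [hF])
  · exact exists_hittingSet_of_notMem_fwinners hn hcD hcW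

end Construction1

theorem fv_construction1_constructive_runoff_partition_TP_general
    (m n k : ℕ) (S : Fin n → Finset (Fin m))
    (hn : 1 < n) :
    (∃ B' : Finset (Fin m), B'.card ≤ k ∧ ∀ i, (B' ∩ S i).Nonempty) ↔
    (∃ C1 C2 : Finset (CandA m), Disjoint C1 C2 ∧ C1 ∪ C2 = CA m ∧
      FV.fwinners (FV.fwinners C1 (VA m n k S) ∪ FV.fwinners C2 (VA m n k S)) (VA m n k S)
        = {CandA.w}) := by
  constructor
  · rintro ⟨B', hB', hhit⟩
    refine ⟨B'.image CandA.b ∪ {CandA.c, CandA.d, CandA.w}, B'ᶜ.image CandA.b, ?_, ?_, ?_⟩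
    · simp only [Finset.disjoint_left, Finset.mem_union, Finset.mem_image, Finset.mem_compl]
      aesop
    · ext x
      cases x <;> simp [CA, em]
    · rw [Construction1.fwinners_image_b_union_eq_w hn hB' hhit]
      refine Construction1.fwinners_w_union_eq_w fun x hx => ?_
      obtain ⟨j, -, rfl⟩ := Finset.mem_image.1 (FV.fwinners_subset _ _ hx)
      exact ⟨j, rfl⟩
  · rintro ⟨C1, C2, -, hC, hfinal⟩
    rcases Finset.mem_union.1 (hC ▸ Construction1.mem_CA CandA.c) with hc | hc
    · exact Construction1.exists_hittingSet_of_fwinners_subset hn hc Finset.subset_union_left hfinal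
    · exact Construction1.exists_hittingSet_of_fwinners_subset hn hc Finset.subset_union_right hfinal

/-- Correctness of the reduction showing fallback voting resistant to
constructive control by run-off partition of candidates in model TP: for the
election `(C,V)` of Construction 1 from a Hitting Set instance `(B,S,k)`
(with `n > 1`, `0 < k < m`, and all `S_i` nonempty), `S` has a hitting set of
size at most `k` if and only if `C` can be partitioned into disjoint `C1` and
`C2` such that `w` is the unique FV winner of the final round
`(W1 ∪ W2, V)`, where `Wi` is the FV winner set of the subelection `(Ci,V)`. -/
theorem fv_construction1_constructive_runoff_partition_TP
    (m n k : ℕ) (S : Fin n → Finset (Fin m))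
    (hn : 1 < n) (hk : 0 < k) (hkm : k < m) (hS : ∀ i, (S i).Nonempty) :
    (∃ B' : Finset (Fin m), B'.card ≤ k ∧ ∀ i, (B' ∩ S i).Nonempty) ↔
    (∃ C1 C2 : Finset (CandA m), Disjoint C1 C2 ∧ C1 ∪ C2 = CA m ∧
      FV.fwinners (FV.fwinners C1 (VA m n k S) ∪ FV.fwinners C2 (VA m n k S)) (VA m n k S)
        = {CandA.w}) :=
  fv_construction1_constructive_runoff_partition_TP_general m n k S hn
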